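/- arXiv:1906.09747 — 2 statements merged into one kernel-verified Lean document; each statement's English description precedes it below -/
import Mathlib

section
/- Let a, b, c ∈ ℂ with c not a nonpositive integer and Re(a+b−c) < 0. Then the hypergeometric series ∑_{p=0}^∞ (a)^(p)(b)^(p)/((c)^(p) p!) · z^p converges absolutely for every z on the unit circle |z| = 1. -/
/-!
Gauss's product formula `Γ(x) = lim n^x n! / (x)_{n+1}` shows that `‖(x)_{n+1}‖` is comparable
to `n^{Re x} n!` when `x` is not a pole of `Γ`; at a pole `(x)_{n+1}` vanishes for large `n`.
Hence on `‖z‖ = 1` the `(n+1)`-st term of the series is `O(n^{Re(a+b-c) - 1})`, which is summable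
because `Re(a+b-c) < 0`.
-/

open Nat Filter Asymptotics

lemma ascPochhammer_eval_eq_prod_range {R : Type*} [CommSemiring R] (n : ℕ) (r : R) :
    (ascPochhammer R n).eval r = ∏ j ∈ Finset.range n, (r + j) := by
  induction n with
  | zero => simp
  | succ n ih => simp [ascPochhammer_succ_right, ih, Finset.prod_range_succ]

lemma rpow_mul_factorial_ratio_isBigO (α β γ : ℝ) :
    (fun n : ℕ => (n : ℝ) ^ α * n ! * ((n : ℝ) ^ β * n !) / ((n : ℝ) ^ γ * n ! * (n + 1)!))
      =O[atTop] fun n => (n : ℝ) ^ (α + β - γ - 1) := by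
  refine IsBigO.of_bound 1 ?_
  filter_upwards [eventually_ge_atTop 1] with n hn
  have hn0 : (0 : ℝ) < n := by exact_mod_cast hn
  have hfac : ((n + 1)! : ℝ) = (n + 1) * n ! := by push_cast [Nat.factorial_succ]; ring
  have hpow : (n : ℝ) ^ (α + β - γ - 1) = (n : ℝ) ^ α * (n : ℝ) ^ β / ((n : ℝ) ^ γ * n) := by
    rw [Real.rpow_sub hn0, Real.rpow_sub hn0, Real.rpow_add hn0, Real.rpow_one, div_div]
  have hnf : (0 : ℝ) < n ! := by exact_mod_cast Nat.factorial_pos n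
  rw [hfac, hpow, one_mul, Real.norm_of_nonneg (by positivity), Real.norm_of_nonneg (by positivity)]
  calc _ = (n : ℝ) ^ α * (n : ℝ) ^ β / ((n : ℝ) ^ γ * (n + 1)) := by field_simp
    _ ≤ _ := by gcongr; linarith

namespace Complex

lemma GammaSeq_mul_ascPochhammer_eval {x : ℂ} {n : ℕ}
    (hx : (ascPochhammer ℂ (n + 1)).eval x ≠ 0) :
    GammaSeq x n * (ascPochhammer ℂ (n + 1)).eval x = (n : ℂ) ^ x * n ! := by
  rw [ascPochhammer_eval_eq_prod_range] at hx ⊢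
  rw [GammaSeq, div_mul_cancel₀ _ hx]

lemma norm_natCast_cpow_mul_factorial {n : ℕ} (hn : n ≠ 0) (x : ℂ) :
    ‖(n : ℂ) ^ x * (n ! : ℂ)‖ = (n : ℝ) ^ x.re * n ! := by
  rw [norm_mul, norm_natCast_cpow_of_pos (Nat.pos_of_ne_zero hn), norm_natCast]

lemma isTheta_norm_ascPochhammer_eval_succ {x : ℂ} (hx : ∀ m : ℕ, x ≠ -m) :
    (fun n : ℕ => ‖(ascPochhammer ℂ (n + 1)).eval x‖) =Θ[atTop]
      fun n => (n : ℝ) ^ x.re * n ! := by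
  have hpoch : ∀ n, (ascPochhammer ℂ (n + 1)).eval x ≠ 0 := by
    intro n h
    obtain ⟨k, -, hk⟩ := (ascPochhammer_eval_eq_zero_iff _ _).mp h
    exact hx k (by rw [hk, neg_neg])
  refine isTheta_of_div_tendsto_nhds_ne_zero (c := ‖Gamma x‖)
    ((GammaSeq_tendsto_Gamma x).norm.congr' ?_) (norm_ne_zero_iff.mpr (Gamma_ne_zero hx))
  filter_upwards [eventually_ne_atTop 0] with n hn
  rw [← norm_natCast_cpow_mul_factorial hn, ← GammaSeq_mul_ascPochhammer_eval (hpoch n),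
    norm_mul, mul_div_cancel_right₀ _ (norm_ne_zero_iff.mpr (hpoch n))]

lemma norm_ascPochhammer_eval_succ_isBigO (x : ℂ) :
    (fun n : ℕ => ‖(ascPochhammer ℂ (n + 1)).eval x‖) =O[atTop]
      fun n => (n : ℝ) ^ x.re * n ! := by
  by_cases hx : ∃ m : ℕ, x = -m
  · obtain ⟨m, rfl⟩ := hx
    refine (isBigO_zero _ _).congr' ?_ EventuallyEq.rfl
    filter_upwards [eventually_ge_atTop m] with n hn
    rw [ascPochhammer_eval_neg_coe_nat_of_lt (by omega), norm_zero]
  · exact (isTheta_norm_ascPochhammer_eval_succ (not_exists.mp hx)).isBigO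

end Complex

theorem hypergeometric_abs_summable_on_circle (a b c : ℂ)
    (hc : ∀ m : ℕ, c ≠ -(m : ℂ)) (hre : (a + b - c).re < 0)
    (z : ℂ) (hz : ‖z‖ = 1) :
    Summable (fun p : ℕ =>
      ‖Polynomial.eval a (ascPochhammer ℂ p) * Polynomial.eval b (ascPochhammer ℂ p) /
        (Polynomial.eval c (ascPochhammer ℂ p) * (p ! : ℂ)) * z ^ p‖) := by
  rw [← summable_nat_add_iff 1]
  refine summable_of_isBigO_nat (g := fun n : ℕ => (n : ℝ) ^ (a.re + b.re - c.re - 1))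
    (Real.summable_nat_rpow.mpr (by simp only [Complex.sub_re, Complex.add_re] at hre; linarith)) ?_
  have hterm := (((Complex.norm_ascPochhammer_eval_succ_isBigO a).mul
    (Complex.norm_ascPochhammer_eval_succ_isBigO b)).mul
    (Complex.isTheta_norm_ascPochhammer_eval_succ hc).inv.isBigO).mul
    (isBigO_refl (fun n : ℕ => ((n + 1)! : ℝ)⁻¹) atTop)
  refine (hterm.congr (fun n => ?_) (fun n => ?_)).trans
    (rpow_mul_factorial_ratio_isBigO a.re b.re c.re)
  · simp only [norm_mul, norm_div, norm_pow, hz, one_pow, mul_one,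
      Complex.norm_natCast]
    ring
  · ring
end

section
/- Let a, b, c ∈ ℂ with c not a nonpositive integer, and let z ∈ ℂ with |z| < 1 and |z/(z−1)| < 1. Then F(a,b;c;z) = (1−z)^{−a} F(a, c−b; c; z/(z−1)), where F is the Gauss hypergeometric series and (1−z)^{−a} is the principal branch. -/
open Nat

noncomputable def hyperSeries (a b c z : ℂ) : ℂ :=
  ∑' p : ℕ, Polynomial.eval a (ascPochhammer ℂ p) * Polynomial.eval b (ascPochhammer ℂ p) /
    (Polynomial.eval c (ascPochhammer ℂ p) * (p ! : ℂ)) * z ^ p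

/-!
For `‖z‖ < 1/2` write `(1 - z)^(-a) (z/(z-1))^i = (-z)^i (1 - z)^(-(a+i))` and expand the last
factor by the binomial series. With `Cᵢ` the coefficients of `F(a, c - b; c; ·)`, the resulting
double series is dominated by `(1 - ‖z‖)^(-‖a‖) ∑ᵢ ‖Cᵢ‖ (‖z‖/(1 - ‖z‖))^i < ∞`, so it may be summed
in any order; summing along the antidiagonals `i + j = p` gives the coefficients of
`F(a, b; c; z)` by the Chu–Vandermonde identity. Both sides are analytic on the convex set
`{‖z‖ < 1, Re z < 1/2}`, which is exactly where `‖z‖ < 1` and `‖z/(z-1)‖ < 1`, so the identity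
extends there by analytic continuation.
-/

open Polynomial Finset

theorem HasSum.sum_antidiagonal {α A : Type*} [AddCommMonoid α] [TopologicalSpace α]
    [ContinuousAdd α] [RegularSpace α] [AddMonoid A] [HasAntidiagonal A] {f : A × A → α} {s : α}
    (h : HasSum f s) : HasSum (fun n ↦ ∑ ij ∈ antidiagonal n, f ij) s :=
  (HasAntidiagonal.sigmaAntidiagonalEquivProd.hasSum_iff.2 h).sigma fun _ ↦ Finset.hasSum _ _

theorem Ring.multichoose_eq_ascPochhammer_eval_div {K : Type*} [Field K] [CharZero K]
    (r : K) (n : ℕ) : Ring.multichoose r n = (ascPochhammer K n).eval r / n ! := by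
  rw [eq_div_iff (by exact_mod_cast n.factorial_ne_zero), mul_comm, ← nsmul_eq_mul,
    Ring.factorial_nsmul_multichoose_eq_ascPochhammer, ascPochhammer_smeval_eq_eval]

theorem Complex.hasSum_ascPochhammer_eval_div_factorial_mul_pow (a : ℂ) {z : ℂ} (hz : ‖z‖ < 1) :
    HasSum (fun k ↦ (ascPochhammer ℂ k).eval a / k ! * z ^ k) ((1 - z) ^ (-a)) := by
  have := (one_div_one_sub_cpow_hasFPowerSeriesOnBall_zero a).hasSum
    (y := z) (by simpa [← ofReal_norm] using hz)
  simpa [FormalMultilinearSeries.ofScalars_apply_eq, ← Ring.multichoose_eq,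
    Ring.multichoose_eq_ascPochhammer_eval_div, cpow_neg, mul_comm] using this

theorem Real.hasSum_ascPochhammer_eval_div_factorial_mul_pow (t : ℝ) {r : ℝ} (hr : |r| < 1) :
    HasSum (fun k ↦ (ascPochhammer ℝ k).eval t / k ! * r ^ k) ((1 - r) ^ (-t)) := by
  have := (one_add_rpow_hasFPowerSeriesOnBall_zero (a := -t)).hasSum
    (y := -r) (by simpa [← ofReal_norm] using hr)
  have hterm (k : ℕ) :
      binomialSeries ℝ (-t) k (fun _ ↦ -r) = (ascPochhammer ℝ k).eval t / k ! * r ^ k := by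
    rw [binomialSeries_apply, Ring.choose_neg', Ring.multichoose_eq_ascPochhammer_eval_div]
    simp only [Units.smul_def, Int.coe_negOnePow, zsmul_eq_mul, List.ofFn_const,
      List.prod_replicate, smul_eq_mul, neg_pow r, Int.natAbs_natCast]
    have h : ((-1 : ℝ) ^ k) * (-1) ^ k = 1 := by rw [← mul_pow]; norm_num
    linear_combination ((ascPochhammer ℝ k).eval t / k ! * r ^ k) * h
  rw [zero_add, ← sub_eq_add_neg] at this
  simpa only [hterm] using this

theorem ascPochhammer_eval_ne_zero {R : Type*} [Ring R] [IsDomain R] {c : R}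
    (hc : ∀ m : ℕ, c ≠ -m) (n : ℕ) : (ascPochhammer R n).eval c ≠ 0 := by
  rw [Ne, ascPochhammer_eval_eq_zero_iff]
  rintro ⟨k, -, hk⟩
  exact hc k (by rw [hk, neg_neg])

theorem ascPochhammer_eval_nonneg {S : Type*} [Semiring S] [PartialOrder S] [IsOrderedRing S]
    {t : S} (ht : 0 ≤ t) (n : ℕ) : 0 ≤ (ascPochhammer S n).eval t := by
  induction n with
  | zero => simp
  | succ n ih => rw [ascPochhammer_succ_eval]; positivity

theorem norm_ascPochhammer_eval_le {R : Type*} [NormedRing R] [NormOneClass R] {x : R} {t : ℝ}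
    (h : ‖x‖ ≤ t) (n : ℕ) : ‖(ascPochhammer R n).eval x‖ ≤ (ascPochhammer ℝ n).eval t := by
  induction n with
  | zero => simp
  | succ n ih =>
    rw [ascPochhammer_succ_eval, ascPochhammer_succ_eval]
    refine (norm_mul_le _ _).trans (mul_le_mul ih ?_ (norm_nonneg _) ((norm_nonneg _).trans ih))
    calc ‖x + n‖ ≤ ‖x‖ + ‖(n : R)‖ := norm_add_le _ _
      _ ≤ t + n := add_le_add h (by simpa using Nat.norm_cast_le (α := R) n)

theorem ascPochhammer_eval_mul_eval_add {R : Type*} [CommSemiring R] (x : R) (m n : ℕ) :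
    (ascPochhammer R m).eval x * (ascPochhammer R n).eval (x + m) =
      (ascPochhammer R (m + n)).eval x := by
  rw [← ascPochhammer_mul, eval_mul, eval_comp, eval_add, eval_X, eval_natCast]

/-- The Chu–Vandermonde identity for rising factorials. -/
theorem ascPochhammer_eval_sub_eq_sum_antidiagonal {R : Type*} [CommRing R] (c d : R) (p : ℕ) :
    (ascPochhammer R p).eval (c - d) = ∑ ij ∈ antidiagonal p, (p.choose ij.1 : R) *
      ((-1) ^ ij.1 * (ascPochhammer R ij.1).eval d * (ascPochhammer R ij.2).eval (c + ij.1)) := by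
  have := Ring.descPochhammer_smeval_add (r := -d) (s := c + p - 1) p (Commute.all _ _)
  simp only [descPochhammer_smeval_eq_ascPochhammer, ascPochhammer_smeval_eq_eval] at this
  convert this using 2 with ij hij
  · ring_nf
  rw [HasAntidiagonal.mem_antidiagonal] at hij
  have hd : (ascPochhammer R ij.1).eval (-d - ij.1 + 1) =
      (-1) ^ ij.1 * (ascPochhammer R ij.1).eval d := by
    rw [← descPochhammer_eval_eq_ascPochhammer, ← neg_neg d,
      ascPochhammer_eval_neg_eq_descPochhammer, ← mul_assoc, ← mul_pow, neg_neg]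
    simp
  have hc : c + p - 1 - ij.2 + 1 = c + ij.1 := by rw [← hij]; push_cast; ring
  rw [hd, hc, mul_assoc]

theorem sum_antidiagonal_ascPochhammer_div_eq {K : Type*} [Field K] [CharZero K] (b : K) {c : K}
    {p : ℕ} (hc : (ascPochhammer K p).eval c ≠ 0) :
    ∑ ij ∈ antidiagonal p, (-1) ^ ij.1 * (ascPochhammer K ij.1).eval (c - b) /
      ((ascPochhammer K ij.1).eval c * ij.1 ! * ij.2 !) =
    (ascPochhammer K p).eval b / ((ascPochhammer K p).eval c * p !) := by
  rw [eq_div_iff (mul_ne_zero hc (Nat.cast_ne_zero.2 p.factorial_ne_zero)), sum_mul]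
  conv_rhs => rw [← sub_sub_cancel c b, ascPochhammer_eval_sub_eq_sum_antidiagonal]
  refine sum_congr rfl fun ij hij ↦ ?_
  rw [HasAntidiagonal.mem_antidiagonal] at hij
  have hsplit := ascPochhammer_eval_mul_eval_add c ij.1 ij.2
  rw [hij] at hsplit
  have hfac : (p ! : K) = p.choose ij.1 * ij.1 ! * ij.2 ! := by
    rw [← hij, ← Nat.choose_mul_factorial_mul_factorial (Nat.le_add_right ij.1 ij.2)]
    push_cast [Nat.add_sub_cancel_left]
    ring
  rw [← hsplit] at hc ⊢
  rw [hfac]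
  field_simp [left_ne_zero_of_mul hc, Nat.factorial_ne_zero]

theorem Complex.norm_div_sub_one_lt_one_iff {z : ℂ} (hz : z ≠ 1) :
    ‖z / (z - 1)‖ < 1 ↔ z.re < 1 / 2 := by
  rw [norm_div, div_lt_one (norm_pos_iff.2 (sub_ne_zero.2 hz)),
    ← sq_lt_sq₀ (norm_nonneg _) (norm_nonneg _), Complex.sq_norm, Complex.sq_norm,
    Complex.normSq_apply, Complex.normSq_apply]
  simp only [Complex.sub_re, Complex.one_re, Complex.sub_im, Complex.one_im, sub_zero]
  constructor <;> intro h <;> nlinarith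

section RCLike

variable {𝕂 : Type*} [RCLike 𝕂]

theorem one_le_radius_ordinaryHypergeometricSeries (𝔸 : Type*) [NormedDivisionRing 𝔸]
    [NormedAlgebra 𝕂 𝔸] (a b : 𝕂) {c : 𝕂} (hc : ∀ m : ℕ, c ≠ -m) :
    1 ≤ (ordinaryHypergeometricSeries 𝔸 a b c).radius := by
  by_cases ha : ∃ k : ℕ, a = -k
  · obtain ⟨k, rfl⟩ := ha
    simp [ordinaryHypergeometric_radius_top_of_neg_nat₁]
  by_cases hb : ∃ k : ℕ, b = -k
  · obtain ⟨k, rfl⟩ := hb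
    simp [ordinaryHypergeometric_radius_top_of_neg_nat₂]
  push Not at ha hb
  refine (ordinaryHypergeometricSeries_radius_eq_one 𝔸 a b c fun k ↦ ?_).ge
  refine ⟨fun h ↦ ha k ?_, fun h ↦ hb k ?_, fun h ↦ hc k ?_⟩ <;> rw [h, neg_neg]

theorem analyticOnNhd_ordinaryHypergeometric {𝔸 : Type*} [NormedDivisionRing 𝔸]
    [NormedAlgebra 𝕂 𝔸] [CompleteSpace 𝔸] (a b : 𝕂) {c : 𝕂} (hc : ∀ m : ℕ, c ≠ -m) :
    AnalyticOnNhd 𝕂 (₂F₁ a b c : 𝔸 → 𝔸) (Metric.ball 0 1) := by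
  have h1 := one_le_radius_ordinaryHypergeometricSeries 𝔸 a b hc
  refine fun x hx ↦ ((ordinaryHypergeometricSeries 𝔸 a b c).hasFPowerSeriesOnBall
    (zero_lt_one.trans_le h1)).analyticAt_of_mem (lt_of_lt_of_le ?_ h1)
  simpa [← ofReal_norm] using hx

theorem summable_norm_ordinaryHypergeometricCoefficient_mul_pow (a b : 𝕂) {c : 𝕂}
    (hc : ∀ m : ℕ, c ≠ -m) {r : ℝ} (hr0 : 0 ≤ r) (hr : r < 1) :
    Summable fun n ↦ ‖ordinaryHypergeometricCoefficient a b c n‖ * r ^ n := by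
  have := (ordinaryHypergeometricSeries 𝕂 a b c).summable_norm_mul_pow (r := r.toNNReal)
    (lt_of_lt_of_le (ENNReal.coe_lt_one_iff.2 (Real.toNNReal_lt_one.2 hr))
      (one_le_radius_ordinaryHypergeometricSeries 𝕂 a b hc))
  simpa [ordinaryHypergeometricSeries, FormalMultilinearSeries.ofScalars_norm,
    Real.coe_toNNReal _ hr0] using this

end RCLike

noncomputable def pfaffTerm (a b c z : ℂ) (ij : ℕ × ℕ) : ℂ :=
  ordinaryHypergeometricCoefficient a (c - b) c ij.1 * (-z) ^ ij.1 *
    ((ascPochhammer ℂ ij.2).eval (a + ij.1) / ij.2 ! * z ^ ij.2)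

section Pfaff

variable {a b c z : ℂ}

theorem hasSum_pfaffTerm_fiber (hz : ‖z‖ < 1) (i : ℕ) :
    HasSum (fun j ↦ pfaffTerm a b c z (i, j))
      ((1 - z) ^ (-a) * (ordinaryHypergeometricCoefficient a (c - b) c i * (z / (z - 1)) ^ i)) := by
  have h1z : 1 - z ≠ 0 := by
    rintro h
    simp [← sub_eq_zero.1 h] at hz
  set C := ordinaryHypergeometricCoefficient a (c - b) c i
  have key := (Complex.hasSum_ascPochhammer_eval_div_factorial_mul_pow (a + i) hz).mul_left
    (C * (-z) ^ i)
  rw [neg_add, Complex.cpow_add _ _ h1z, Complex.cpow_neg _ (i : ℂ), Complex.cpow_natCast] at key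
  have hw : z / (z - 1) = -z / (1 - z) := by rw [← neg_sub z 1, neg_div_neg_eq]
  rwa [hw, div_pow, show (1 - z) ^ (-a) * (C * ((-z) ^ i / (1 - z) ^ i)) =
    C * (-z) ^ i * ((1 - z) ^ (-a) * ((1 - z) ^ i)⁻¹) by ring]

theorem sum_antidiagonal_pfaffTerm (hc : ∀ m : ℕ, c ≠ -m) (p : ℕ) :
    ∑ ij ∈ antidiagonal p, pfaffTerm a b c z ij =
      ordinaryHypergeometricCoefficient a b c p * z ^ p := by
  have hterm : ∀ ij ∈ antidiagonal p, pfaffTerm a b c z ij =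
      (ascPochhammer ℂ p).eval a * z ^ p * ((-1) ^ ij.1 * (ascPochhammer ℂ ij.1).eval (c - b) /
        ((ascPochhammer ℂ ij.1).eval c * ij.1 ! * ij.2 !)) := by
    rintro ⟨i, j⟩ hij
    rw [HasAntidiagonal.mem_antidiagonal] at hij
    subst hij
    rw [pfaffTerm, ← ascPochhammer_eval_mul_eval_add, neg_pow, pow_add]
    ring
  rw [sum_congr rfl hterm, ← mul_sum,
    sum_antidiagonal_ascPochhammer_div_eq b (ascPochhammer_eval_ne_zero hc p)]
  ring

theorem summable_pfaffTerm (hc : ∀ m : ℕ, c ≠ -m) (hz : ‖z‖ < 1 / 2) :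
    Summable (pfaffTerm a b c z) := by
  set r := ‖z‖
  have hr0 : 0 ≤ r := norm_nonneg z
  have h1r : 0 < 1 - r := by linarith
  let C i := ‖ordinaryHypergeometricCoefficient a (c - b) c i‖
  let G : ℕ × ℕ → ℝ := fun ij ↦
    C ij.1 * r ^ ij.1 * ((ascPochhammer ℝ ij.2).eval (‖a‖ + ij.1) / ij.2 ! * r ^ ij.2)
  have hG0 : 0 ≤ G := fun ij ↦ by
    have := ascPochhammer_eval_nonneg (t := ‖a‖ + ij.1) (by positivity) ij.2
    positivity
  have hfiber (i : ℕ) : HasSum (fun j ↦ G (i, j)) (C i * r ^ i * (1 - r) ^ (-(‖a‖ + i))) :=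
    (Real.hasSum_ascPochhammer_eval_div_factorial_mul_pow _
      (by rw [abs_of_nonneg hr0]; linarith)).mul_left _
  have hGsum : Summable G := by
    refine (summable_prod_of_nonneg hG0).2 ⟨fun i ↦ (hfiber i).summable, ?_⟩
    have hq : r / (1 - r) < 1 := by rw [div_lt_one h1r]; linarith
    refine ((summable_norm_ordinaryHypergeometricCoefficient_mul_pow a (c - b) hc
      (by positivity) hq).mul_left ((1 - r) ^ (-‖a‖))).congr fun i ↦ ?_
    rw [(hfiber i).tsum_eq, neg_add, Real.rpow_add h1r, Real.rpow_neg h1r.le (i : ℝ),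
      Real.rpow_natCast, div_pow]
    ring
  refine hGsum.of_norm_bounded fun ⟨i, j⟩ ↦ ?_
  simp only [pfaffTerm, G, C, r, norm_mul, norm_pow, norm_neg, norm_div, Complex.norm_natCast]
  gcongr
  exact norm_ascPochhammer_eval_le ((norm_add_le _ _).trans (by simp)) j

theorem ordinaryHypergeometric_pfaff_of_norm_lt_half (hc : ∀ m : ℕ, c ≠ -m) (hz : ‖z‖ < 1 / 2) :
    ₂F₁ a b c z = (1 - z) ^ (-a) * ₂F₁ a (c - b) c (z / (z - 1)) := by
  have hF := (summable_pfaffTerm (a := a) (b := b) hc hz).hasSum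
  have hL := hF.sum_antidiagonal
  simp only [sum_antidiagonal_pfaffTerm hc] at hL
  have hR := hF.prod_fiberwise (hasSum_pfaffTerm_fiber (by linarith))
  simp only [ordinaryHypergeometric_eq_tsum, smul_eq_mul]
  rw [hL.tsum_eq, ← hR.tsum_eq, tsum_mul_left]

theorem ordinaryHypergeometric_pfaff (hc : ∀ m : ℕ, c ≠ -m) (hz : ‖z‖ < 1)
    (hz' : ‖z / (z - 1)‖ < 1) :
    ₂F₁ a b c z = (1 - z) ^ (-a) * ₂F₁ a (c - b) c (z / (z - 1)) := by
  have hne {w : ℂ} (hw : ‖w‖ < 1) : w ≠ 1 := by rintro rfl; simp at hw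
  let U := Metric.ball (0 : ℂ) 1 ∩ {w | w.re < 1 / 2}
  have hUconv : Convex ℝ U := (convex_ball 0 1).inter (convex_halfSpace_re_lt _)
  have hF : AnalyticOnNhd ℂ (₂F₁ a b c) U :=
    (analyticOnNhd_ordinaryHypergeometric a b hc).mono Set.inter_subset_left
  have hG : AnalyticOnNhd ℂ (fun w ↦ (1 - w) ^ (-a) * ₂F₁ a (c - b) c (w / (w - 1))) U := by
    rintro w ⟨hw, hre⟩
    rw [mem_ball_zero_iff] at hw
    have hw' := (Complex.norm_div_sub_one_lt_one_iff (hne hw)).2 hre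
    refine AnalyticAt.mul ?_ ?_
    · refine (analyticAt_const.sub analyticAt_id).cpow analyticAt_const
        (Complex.mem_slitPlane_iff.2 (Or.inl ?_))
      change 0 < (1 - w).re
      rw [Complex.sub_re, Complex.one_re]
      linarith [show w.re < 1 / 2 from hre]
    · exact (analyticOnNhd_ordinaryHypergeometric a (c - b) hc _ (mem_ball_zero_iff.2 hw')).comp
        (f := fun u ↦ u / (u - 1))
        (analyticAt_id.div (analyticAt_id.sub analyticAt_const) (sub_ne_zero.2 (hne hw)))
  have hsmall : ₂F₁ a b c =ᶠ[nhds (0 : ℂ)] fun w ↦ (1 - w) ^ (-a) * ₂F₁ a (c - b) c (w / (w - 1)) :=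
    Filter.eventually_of_mem (Metric.ball_mem_nhds (0 : ℂ) (by norm_num : (0 : ℝ) < 1 / 2))
      fun w hw ↦ ordinaryHypergeometric_pfaff_of_norm_lt_half hc (mem_ball_zero_iff.1 hw)
  exact hF.eqOn_of_preconnected_of_eventuallyEq hG hUconv.isPreconnected ⟨by simp, by simp⟩
    hsmall ⟨mem_ball_zero_iff.2 hz, (Complex.norm_div_sub_one_lt_one_iff (hne hz)).1 hz'⟩

end Pfaff

theorem hyperSeries_eq_ordinaryHypergeometric (a b c : ℂ) : hyperSeries a b c = ₂F₁ a b c := by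
  ext z
  simp only [hyperSeries, ordinaryHypergeometric_eq_tsum, smul_eq_mul]
  exact tsum_congr fun p ↦ by ring

theorem pfaff_transformation (a b c z : ℂ)
    (hc : ∀ m : ℕ, c ≠ -(m : ℂ)) (hz : ‖z‖ < 1) (hz' : ‖z / (z - 1)‖ < 1) :
    hyperSeries a b c z = (1 - z) ^ (-a) * hyperSeries a (c - b) c (z / (z - 1)) := by
  simp only [hyperSeries_eq_ordinaryHypergeometric]
  exact ordinaryHypergeometric_pfaff hc hz hz'
end
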